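/- arXiv:1303.0697 — 2 statements merged into one kernel-verified Lean document; each statement's English description precedes it below -/
import Mathlib

section
/- Let R be a ring, M a right R-module, W = End_R(M), and α an anti-endomorphism of W. Then: (1) if M is finitely generated projective as a right R-module, or M^α is finitely generated projective as a right W-module, then b_α is right regular; (2) if M^α is projective as a right W-module and M is finitely generated as a right R-module, then b_α is right regular; (3) if M^α embeds in a free right W-module, then b_α is right injective; (4) if M^α embeds in a flat right W-module and M is finitely generated as a right R-module, then b_α is right injective. -/
open MulOpposite TensorProduct Function

universe u v w v'

section Core

/-- An anti-endomorphism of a ring: additive, unital, reverses multiplication. -/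
def IsAntiEndo {W : Type*} [Ring W] (α : W → W) : Prop :=
  (∀ u v : W, α (u + v) = α u + α v) ∧ α 1 = 1 ∧ ∀ u v : W, α (u * v) = α v * α u

/-- An anti-automorphism of a ring: a bijective anti-endomorphism. -/
def IsAntiAuto {W : Type*} [Ring W] (α : W → W) : Prop :=
  IsAntiEndo α ∧ Function.Bijective α

/-- An inner automorphism of a ring: conjugation by a unit. -/
def IsInnerAut {W : Type*} [Ring W] (φ : W → W) : Prop :=
  ∃ u : Wˣ, ∀ w : W, φ w = ↑u * w * ↑u⁻¹

variable (R : Type u) [Ring R]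

/-- A double `R`-module structure on the additive group `K`: two commuting
right `R`-module structures `m0` and `m1`. -/
structure DoubleModule (K : Type v) [AddCommGroup K] where
  m0 : K → R → K
  m1 : K → R → K
  m0_add_left : ∀ (k k' : K) (r : R), m0 (k + k') r = m0 k r + m0 k' r
  m0_add_right : ∀ (k : K) (r r' : R), m0 k (r + r') = m0 k r + m0 k r'
  m0_mul : ∀ (k : K) (r r' : R), m0 k (r * r') = m0 (m0 k r) r'
  m0_one : ∀ k : K, m0 k 1 = k
  m1_add_left : ∀ (k k' : K) (r : R), m1 (k + k') r = m1 k r + m1 k' r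
  m1_add_right : ∀ (k : K) (r r' : R), m1 k (r + r') = m1 k r + m1 k r'
  m1_mul : ∀ (k : K) (r r' : R), m1 k (r * r') = m1 (m1 k r) r'
  m1_one : ∀ k : K, m1 k 1 = k
  comm : ∀ (k : K) (a b : R), m1 (m0 k a) b = m0 (m1 k b) a

variable {R}

/-- A homomorphism of double `R`-modules. -/
def IsDoubleHom {K : Type v} {K' : Type w} [AddCommGroup K] [AddCommGroup K']
    (DK : DoubleModule R K) (DK' : DoubleModule R K') (f : K → K') : Prop :=
  (∀ k k' : K, f (k + k') = f k + f k') ∧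
  (∀ (k : K) (r : R), f (DK.m0 k r) = DK'.m0 (f k) r) ∧
  (∀ (k : K) (r : R), f (DK.m1 k r) = DK'.m1 (f k) r)

/-- An isomorphism of double `R`-modules. -/
def IsDoubleIso {K : Type v} {K' : Type w} [AddCommGroup K] [AddCommGroup K']
    (DK : DoubleModule R K) (DK' : DoubleModule R K') (f : K → K') : Prop :=
  IsDoubleHom DK DK' f ∧ Function.Bijective f

/-- An anti-automorphism of a double `R`-module: an additive bijection exchanging
the two module structures. -/
def IsDoubleAntiAuto {K : Type v} [AddCommGroup K] (DK : DoubleModule R K) (θ : K → K) : Prop :=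
  Function.Bijective θ ∧ (∀ k k' : K, θ (k + k') = θ k + θ k') ∧
  (∀ (k : K) (r : R), θ (DK.m0 k r) = DK.m1 (θ k) r) ∧
  (∀ (k : K) (r : R), θ (DK.m1 k r) = DK.m0 (θ k) r)

variable (R)

/-- A general bilinear form on a right `R`-module `M` (encoded as a module over `Rᵐᵒᵖ`)
with values in a double `R`-module `(K, DK)`. -/
structure GBF (M : Type v) [AddCommGroup M] [Module Rᵐᵒᵖ M]
    (K : Type w) [AddCommGroup K] (DK : DoubleModule R K) where
  b : M → M → K
  add_left : ∀ x x' y : M, b (x + x') y = b x y + b x' y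
  add_right : ∀ x y y' : M, b x (y + y') = b x y + b x y'
  smul_left : ∀ (x y : M) (r : R), b (op r • x) y = DK.m0 (b x y) r
  smul_right : ∀ (x y : M) (r : R), b x (op r • y) = DK.m1 (b x y) r

variable {R}

namespace GBF

variable {M : Type v} [AddCommGroup M] [Module Rᵐᵒᵖ M]
  {K : Type w} [AddCommGroup K] {DK : DoubleModule R K}

/-- The right adjoint of `β` is injective. -/
def RightInjective (β : GBF R M K DK) : Prop :=
  ∀ x x' : M, (∀ y : M, β.b y x = β.b y x') → x = x'

/-- The right adjoint of `β` is bijective onto `Hom_R(M, K₀)`. -/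
def RightRegular (β : GBF R M K DK) : Prop :=
  β.RightInjective ∧
  ∀ f : M → K, (∀ y y' : M, f (y + y') = f y + f y') →
    (∀ (y : M) (r : R), f (op r • y) = DK.m0 (f y) r) →
    ∃ x : M, ∀ y : M, f y = β.b y x

/-- The left adjoint of `β` is injective. -/
def LeftInjective (β : GBF R M K DK) : Prop :=
  ∀ x x' : M, (∀ y : M, β.b x y = β.b x' y) → x = x'

/-- The left adjoint of `β` is bijective onto `Hom_R(M, K₁)`. -/
def LeftRegular (β : GBF R M K DK) : Prop :=
  β.LeftInjective ∧
  ∀ f : M → K, (∀ y y' : M, f (y + y') = f y + f y') →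
    (∀ (y : M) (r : R), f (op r • y) = DK.m1 (f y) r) →
    ∃ x : M, ∀ y : M, f y = β.b x y

/-- `α` is an adjoint anti-endomorphism for `β`: `β(w x, y) = β(x, α(w) y)`. -/
def IsAdjoint (β : GBF R M K DK) (α : Module.End Rᵐᵒᵖ M → Module.End Rᵐᵒᵖ M) : Prop :=
  ∀ (w : Module.End Rᵐᵒᵖ M) (x y : M), β.b (w x) y = β.b x (α w y)

/-- Similarity of general bilinear forms on the same module. -/
def Similar {K' : Type v'} [AddCommGroup K'] {DK' : DoubleModule R K'}
    (β : GBF R M K DK) (β' : GBF R M K' DK') : Prop :=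
  ∃ f : K → K', IsDoubleIso DK DK' f ∧ ∀ x y : M, β'.b x y = f (β.b x y)

end GBF

section Kalpha

variable {M : Type v} [AddCommGroup M] [Module Rᵐᵒᵖ M]

/-- The subgroup of `M ⊗_ℤ M` generated by the elements `(w x) ⊗ y - x ⊗ (α w y)`. -/
def kalphaRel (α : Module.End Rᵐᵒᵖ M → Module.End Rᵐᵒᵖ M) : Submodule ℤ (M ⊗[ℤ] M) :=
  Submodule.span ℤ
    {z | ∃ (w : Module.End Rᵐᵒᵖ M) (x y : M), z = (w x) ⊗ₜ[ℤ] y - x ⊗ₜ[ℤ] (α w y)}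

/-- `K_α`, the quotient of `M ⊗_ℤ M` by the relations `(w x) ⊗ y = x ⊗ (α w y)`. -/
abbrev Kalpha (α : Module.End Rᵐᵒᵖ M → Module.End Rᵐᵒᵖ M) : Type _ :=
  (M ⊗[ℤ] M) ⧸ kalphaRel α

/-- The map `x ⊗ y ↦ (x·r) ⊗ y` on `M ⊗_ℤ M`. -/
noncomputable def smulLeftMap (r : R) : (M ⊗[ℤ] M) →ₗ[ℤ] (M ⊗[ℤ] M) :=
  TensorProduct.map ((DistribMulAction.toAddMonoidHom M (op r : Rᵐᵒᵖ)).toIntLinearMap)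
    LinearMap.id

/-- The map `x ⊗ y ↦ x ⊗ (y·r)` on `M ⊗_ℤ M`. -/
noncomputable def smulRightMap (r : R) : (M ⊗[ℤ] M) →ₗ[ℤ] (M ⊗[ℤ] M) :=
  TensorProduct.map LinearMap.id
    ((DistribMulAction.toAddMonoidHom M (op r : Rᵐᵒᵖ)).toIntLinearMap)

theorem smulLeftMap_tmul (r : R) (x y : M) :
    smulLeftMap (M := M) r (x ⊗ₜ[ℤ] y) = (op r • x) ⊗ₜ[ℤ] y := rfl

theorem smulRightMap_tmul (r : R) (x y : M) :
    smulRightMap (M := M) r (x ⊗ₜ[ℤ] y) = x ⊗ₜ[ℤ] (op r • y) := rfl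

theorem kalphaRel_le_left (α : Module.End Rᵐᵒᵖ M → Module.End Rᵐᵒᵖ M) (r : R) :
    kalphaRel α ≤ (kalphaRel α).comap (smulLeftMap (M := M) r) := by
  rw [kalphaRel, Submodule.span_le]
  rintro _ ⟨w, x, y, rfl⟩
  rw [SetLike.mem_coe, Submodule.mem_comap, map_sub]
  have h1 : smulLeftMap (M := M) r ((w x) ⊗ₜ[ℤ] y) = (w (op r • x)) ⊗ₜ[ℤ] y := by
    simp [smulLeftMap_tmul, map_smul]
  have h2 : smulLeftMap (M := M) r (x ⊗ₜ[ℤ] (α w y)) = (op r • x) ⊗ₜ[ℤ] (α w y) := by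
    simp [smulLeftMap_tmul]
  rw [h1, h2]
  exact Submodule.subset_span ⟨w, op r • x, y, rfl⟩

theorem kalphaRel_le_right (α : Module.End Rᵐᵒᵖ M → Module.End Rᵐᵒᵖ M) (r : R) :
    kalphaRel α ≤ (kalphaRel α).comap (smulRightMap (M := M) r) := by
  rw [kalphaRel, Submodule.span_le]
  rintro _ ⟨w, x, y, rfl⟩
  rw [SetLike.mem_coe, Submodule.mem_comap, map_sub]
  have h1 : smulRightMap (M := M) r ((w x) ⊗ₜ[ℤ] y) = (w x) ⊗ₜ[ℤ] (op r • y) := by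
    simp [smulRightMap_tmul]
  have h2 : smulRightMap (M := M) r (x ⊗ₜ[ℤ] (α w y)) = x ⊗ₜ[ℤ] (α w (op r • y)) := by
    simp [smulRightMap_tmul, map_smul]
  rw [h1, h2]
  exact Submodule.subset_span ⟨w, x, op r • y, rfl⟩

/-- The `m0`-action on `K_α`. -/
noncomputable def kSmul0 (α : Module.End Rᵐᵒᵖ M → Module.End Rᵐᵒᵖ M) (r : R) :
    Kalpha α →ₗ[ℤ] Kalpha α :=
  Submodule.mapQ _ _ (smulLeftMap r) (kalphaRel_le_left α r)

/-- The `m1`-action on `K_α`. -/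
noncomputable def kSmul1 (α : Module.End Rᵐᵒᵖ M → Module.End Rᵐᵒᵖ M) (r : R) :
    Kalpha α →ₗ[ℤ] Kalpha α :=
  Submodule.mapQ _ _ (smulRightMap r) (kalphaRel_le_right α r)

theorem kSmul0_mk (α : Module.End Rᵐᵒᵖ M → Module.End Rᵐᵒᵖ M) (r : R) (t : M ⊗[ℤ] M) :
    kSmul0 α r (Submodule.Quotient.mk t) = Submodule.Quotient.mk (smulLeftMap r t) := rfl

theorem kSmul1_mk (α : Module.End Rᵐᵒᵖ M → Module.End Rᵐᵒᵖ M) (r : R) (t : M ⊗[ℤ] M) :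
    kSmul1 α r (Submodule.Quotient.mk t) = Submodule.Quotient.mk (smulRightMap r t) := rfl

/-- The double `R`-module structure on `K_α`. -/
noncomputable def KalphaDM (α : Module.End Rᵐᵒᵖ M → Module.End Rᵐᵒᵖ M) :
    DoubleModule R (Kalpha α) where
  m0 k r := kSmul0 α r k
  m1 k r := kSmul1 α r k
  m0_add_left k k' r := map_add _ k k'
  m0_add_right := by
    intro k r r'
    induction k using Submodule.Quotient.induction_on with
    | _ t =>
      rw [kSmul0_mk, kSmul0_mk, kSmul0_mk, ← Submodule.Quotient.mk_add]
      congr 1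
      induction t with
      | zero => simp
      | tmul x y => simp [smulLeftMap_tmul, op_add, add_smul, TensorProduct.add_tmul]
      | add a b ha hb => rw [map_add, map_add, map_add, ha, hb]; abel
  m0_mul := by
    intro k r r'
    induction k using Submodule.Quotient.induction_on with
    | _ t =>
      rw [kSmul0_mk, kSmul0_mk, kSmul0_mk]
      congr 1
      induction t with
      | zero => simp
      | tmul x y => simp [smulLeftMap_tmul, op_mul, mul_smul]
      | add a b ha hb => rw [map_add, map_add, map_add, ha, hb]
  m0_one := by
    intro k
    induction k using Submodule.Quotient.induction_on with
    | _ t =>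
      rw [kSmul0_mk]
      congr 1
      induction t with
      | zero => simp
      | tmul x y => simp [smulLeftMap_tmul]
      | add a b ha hb => rw [map_add, ha, hb]
  m1_add_left k k' r := map_add _ k k'
  m1_add_right := by
    intro k r r'
    induction k using Submodule.Quotient.induction_on with
    | _ t =>
      rw [kSmul1_mk, kSmul1_mk, kSmul1_mk, ← Submodule.Quotient.mk_add]
      congr 1
      induction t with
      | zero => simp
      | tmul x y => simp [smulRightMap_tmul, op_add, add_smul, TensorProduct.tmul_add]
      | add a b ha hb => rw [map_add, map_add, map_add, ha, hb]; abel
  m1_mul := by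
    intro k r r'
    induction k using Submodule.Quotient.induction_on with
    | _ t =>
      rw [kSmul1_mk, kSmul1_mk, kSmul1_mk]
      congr 1
      induction t with
      | zero => simp
      | tmul x y => simp [smulRightMap_tmul, op_mul, mul_smul]
      | add a b ha hb => rw [map_add, map_add, map_add, ha, hb]
  m1_one := by
    intro k
    induction k using Submodule.Quotient.induction_on with
    | _ t =>
      rw [kSmul1_mk]
      congr 1
      induction t with
      | zero => simp
      | tmul x y => simp [smulRightMap_tmul]
      | add a b ha hb => rw [map_add, ha, hb]
  comm := by
    intro k a c
    induction k using Submodule.Quotient.induction_on with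
    | _ t =>
      rw [kSmul0_mk, kSmul1_mk, kSmul1_mk, kSmul0_mk]
      congr 1
      induction t with
      | zero => simp
      | tmul x y => simp [smulLeftMap_tmul, smulRightMap_tmul]
      | add p q hp hq => rw [map_add, map_add, map_add, map_add, hp, hq]

/-- The universal general bilinear form `b_α : M × M → K_α`. -/
noncomputable def balpha (α : Module.End Rᵐᵒᵖ M → Module.End Rᵐᵒᵖ M) :
    GBF R M (Kalpha α) (KalphaDM α) where
  b x y := Submodule.Quotient.mk (x ⊗ₜ[ℤ] y)
  add_left x x' y := by
    rw [TensorProduct.add_tmul, Submodule.Quotient.mk_add]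
  add_right x y y' := by
    rw [TensorProduct.tmul_add, Submodule.Quotient.mk_add]
  smul_left x y r := by
    show _ = kSmul0 α r (Submodule.Quotient.mk (x ⊗ₜ[ℤ] y))
    rw [kSmul0_mk]
    congr 1
  smul_right x y r := by
    show _ = kSmul1 α r (Submodule.Quotient.mk (x ⊗ₜ[ℤ] y))
    rw [kSmul1_mk]
    congr 1

end Kalpha

end Core

section BalTensor

/-- The subgroup of relations defining the balanced tensor product `A ⊗_S B` of a right
`S`-module `A` and a left `S`-module `B` over a (possibly noncommutative) ring `S`. -/
def balRel (S : Type u) [Ring S] (A : Type v) [AddCommGroup A] [Module Sᵐᵒᵖ A]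
    (B : Type w) [AddCommGroup B] [Module S B] : Submodule ℤ (A ⊗[ℤ] B) :=
  Submodule.span ℤ
    {z | ∃ (s : S) (a : A) (b : B), z = (op s • a) ⊗ₜ[ℤ] b - a ⊗ₜ[ℤ] (s • b)}

/-- The balanced tensor product `A ⊗_S B` over a possibly noncommutative ring `S`. -/
abbrev BalTensor (S : Type u) [Ring S] (A : Type v) [AddCommGroup A] [Module Sᵐᵒᵖ A]
    (B : Type w) [AddCommGroup B] [Module S B] : Type (max v w) :=
  (A ⊗[ℤ] B) ⧸ balRel S A B

/-- Functoriality of the balanced tensor product in both arguments. -/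
noncomputable def balMap {S : Type u} [Ring S] {A : Type v} {A' : Type v'}
    {B : Type w} {B' : Type w'}
    [AddCommGroup A] [AddCommGroup A'] [AddCommGroup B] [AddCommGroup B']
    [Module Sᵐᵒᵖ A] [Module Sᵐᵒᵖ A'] [Module S B] [Module S B']
    (f : A →ₗ[Sᵐᵒᵖ] A') (g : B →ₗ[S] B') :
    BalTensor S A B →ₗ[ℤ] BalTensor S A' B' :=
  Submodule.liftQ _ ((balRel S A' B').mkQ ∘ₗ
      TensorProduct.map (f.toAddMonoidHom.toIntLinearMap) (g.toAddMonoidHom.toIntLinearMap))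
    (by
      rw [balRel, Submodule.span_le]
      rintro _ ⟨s, a, b, rfl⟩
      erw [SetLike.mem_coe, LinearMap.mem_ker, LinearMap.comp_apply, map_sub,
        TensorProduct.map_tmul, TensorProduct.map_tmul]
      have h1 : f.toAddMonoidHom.toIntLinearMap (op s • a) = op s • f a := f.map_smul _ _
      have h2 : g.toAddMonoidHom.toIntLinearMap (s • b) = s • g b := g.map_smul _ _
      rw [h1, h2, map_sub, sub_eq_zero]
      have hmem : (op s • f a) ⊗ₜ[ℤ] (g.toAddMonoidHom.toIntLinearMap b) -
          (f.toAddMonoidHom.toIntLinearMap a) ⊗ₜ[ℤ] (s • g b) ∈ balRel S A' B' :=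
        Submodule.subset_span ⟨s, f a, g b, rfl⟩
      rw [← sub_eq_zero] at *
      rw [← map_sub]
      exact (Submodule.Quotient.mk_eq_zero _).mpr hmem)

theorem balMap_mk {S : Type u} [Ring S] {A : Type v} {A' : Type v'}
    {B : Type w} {B' : Type w'}
    [AddCommGroup A] [AddCommGroup A'] [AddCommGroup B] [AddCommGroup B']
    [Module Sᵐᵒᵖ A] [Module Sᵐᵒᵖ A'] [Module S B] [Module S B']
    (f : A →ₗ[Sᵐᵒᵖ] A') (g : B →ₗ[S] B') (a : A) (b : B) :
    balMap f g (Submodule.Quotient.mk (a ⊗ₜ[ℤ] b)) =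
      Submodule.Quotient.mk ((f a) ⊗ₜ[ℤ] (g b)) := rfl

/-- A left `S`-module `F` is flat if `— ⊗_S F` preserves injectivity of maps of right
`S`-modules. -/
def LeftFlat (S : Type u) [Ring S] (F : Type w) [AddCommGroup F] [Module S F] : Prop :=
  ∀ (A A' : Type u) (iA : AddCommGroup A) (iA' : AddCommGroup A')
    (mA : Module Sᵐᵒᵖ A) (mA' : Module Sᵐᵒᵖ A') (f : A →ₗ[Sᵐᵒᵖ] A'),
    Function.Injective f → Function.Injective (balMap f (LinearMap.id : F →ₗ[S] F))

/-- A right `S`-module `F` is flat if `F ⊗_S —` preserves injectivity of maps of left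
`S`-modules. -/
def RightFlat (S : Type u) [Ring S] (F : Type v) [AddCommGroup F] [Module Sᵐᵒᵖ F] : Prop :=
  ∀ (B B' : Type u) (iB : AddCommGroup B) (iB' : AddCommGroup B')
    (mB : Module S B) (mB' : Module S B') (g : B →ₗ[S] B'),
    Function.Injective g → Function.Injective (balMap (LinearMap.id : F →ₗ[Sᵐᵒᵖ] F) g)

end BalTensor

/-- The right `W`-module `M^α` (`W = End_R(M)`): the additive group `M` with the right
action `m · w := α(w) m`. -/
def malphaModule {R : Type u} [Ring R] {M : Type v} [AddCommGroup M] [Module Rᵐᵒᵖ M]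
    (α : Module.End Rᵐᵒᵖ M → Module.End Rᵐᵒᵖ M) (hα : IsAntiEndo α) :
    Module (Module.End Rᵐᵒᵖ M)ᵐᵒᵖ M where
  smul w m := α w.unop m
  one_smul m := by show α 1 m = m; rw [hα.2.1]; rfl
  mul_smul w w' m := by
    show α (w * w').unop m = α w.unop (α w'.unop m)
    rw [MulOpposite.unop_mul, hα.2.2]
    rfl
  smul_zero w := map_zero _
  smul_add w m m' := map_add _ m m'
  add_smul w w' m := by
    show α (w + w').unop m = α w.unop m + α w'.unop m
    rw [MulOpposite.unop_add, hα.1]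
    rfl
  zero_smul m := by
    show α 0 m = 0
    have h0 : α 0 = 0 := by
      have h := hα.1 0 0
      rw [add_zero] at h
      exact (left_eq_add.mp h)
    rw [h0]
    rfl

/-!
Everything rests on the universal property of `K_α`: a biadditive `f` on `M × M` with
`f (w x) y = f x (α w y)` factors through `b_α`. A `W`-linear `h : M^α → W` thus induces
`ĥ : K_α → M`, `x ⊗ y ↦ h(y) x`, which is `R`-linear for `•₀`. For a dual basis `(h_i, p_i)`
of `M^α` this gives `t = Σ_i b_α(ĥ_i t, p_i)`, so `Ad^r` is injective, and
`f = Ad^r(Σ_i α(ĥ_i ∘ f) p_i)` as soon as only finitely many `ĥ_i ∘ f` are nonzero (`ι` finite,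
or `M_R` finitely generated). If instead `M_R` has a finite dual basis `(φ_i, v_i)`, the maps
`x ⊗ y ↦ α(φ_i(·) x) y` split `Ad^r` directly, because `Σ_i φ_i(·) v_i = 1` in `W`. For a flat
`F ⊇ M^α`, `c = g x - g x'` satisfies `c ⊗ m = 0` in `F ⊗_W M` for every `m`; generators
`v_1, …, v_k` of `M_R` embed `W` into `M^k`, so flatness gives `c ⊗ 1 = 0` in `F ⊗_W W ≅ F`.
-/

theorem IsAntiEndo.map_sum {W : Type*} [Ring W] {α : W → W} (hα : IsAntiEndo α) {ι : Type*}
    (s : Finset ι) (f : ι → W) : α (∑ i ∈ s, f i) = ∑ i ∈ s, α (f i) :=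
  _root_.map_sum (AddMonoidHom.mk' α hα.1) f s

theorem Module.Projective.exists_fin_linearCombination_comp_eq_id (R P : Type*) [Semiring R]
    [AddCommMonoid P] [Module R P] [Module.Finite R P] [Module.Projective R P] :
    ∃ (n : ℕ) (s : P →ₗ[R] Fin n →₀ R) (v : Fin n → P),
      Finsupp.linearCombination R v ∘ₗ s = LinearMap.id := by
  obtain ⟨n, v, hv⟩ := Module.Finite.exists_fin (R := R) (M := P)
  have hsurj : Surjective (Finsupp.linearCombination R v) := by
    rw [← LinearMap.range_eq_top, Finsupp.range_linearCombination, hv]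
  obtain ⟨s, hs⟩ := Module.projective_lifting_property _ LinearMap.id hsurj
  exact ⟨n, s, v, hs⟩

theorem LinearMap.exists_finset_support_subset {R M N ι : Type*} [Semiring R] [AddCommMonoid M]
    [Module R M] [Module.Finite R M] [AddCommMonoid N] [Module R N] (F : M →ₗ[R] ι →₀ N) :
    ∃ S : Finset ι, ∀ m, (F m).support ⊆ S := by
  classical
  obtain ⟨n, v, hv⟩ := Module.Finite.exists_fin (R := R) (M := M)
  refine ⟨Finset.univ.biUnion fun j => (F (v j)).support, fun m => ?_⟩
  have hm : m ∈ Submodule.span R (Set.range v) := hv ▸ Submodule.mem_top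
  induction hm using Submodule.span_induction with
  | mem _ hx =>
    obtain ⟨j, rfl⟩ := hx
    exact Finset.subset_biUnion_of_mem (fun j => (F (v j)).support) (Finset.mem_univ j)
  | zero => simp
  | add x y _ _ hx hy =>
    rw [map_add]
    exact Finsupp.support_add.trans (Finset.union_subset hx hy)
  | smul r x _ hx =>
    rw [map_smul]
    exact Finsupp.support_smul.trans hx

theorem LinearMap.comp_smulRight {R M₁ M M₂ : Type*} [Semiring R] [AddCommMonoid M₁]
    [AddCommMonoid M] [AddCommMonoid M₂] [Module R M₁] [Module R M] [Module R M₂]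
    (f : M₁ →ₗ[R] R) (g : M →ₗ[R] M₂) (x : M) : g ∘ₗ f.smulRight x = f.smulRight (g x) :=
  LinearMap.ext fun c => g.map_smul (f c) x

noncomputable def TensorProduct.liftBiadditive {A B C : Type*} [AddCommGroup A] [AddCommGroup B]
    [AddCommGroup C] (f : A → B → C) (hl : ∀ a a' b, f (a + a') b = f a b + f a' b)
    (hr : ∀ a b b', f a (b + b') = f a b + f a b') : A ⊗[ℤ] B →ₗ[ℤ] C :=
  (TensorProduct.liftAddHom
    (AddMonoidHom.mk' (fun a => AddMonoidHom.mk' (f a) (hr a)) fun a a' =>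
      AddMonoidHom.ext (hl a a'))
    fun n a b => by rw [map_zsmul, map_zsmul]; rfl).toIntLinearMap

@[simp]
theorem TensorProduct.liftBiadditive_tmul {A B C : Type*} [AddCommGroup A] [AddCommGroup B]
    [AddCommGroup C] (f : A → B → C) (hl : ∀ a a' b, f (a + a') b = f a b + f a' b)
    (hr : ∀ a b b', f a (b + b') = f a b + f a b') (a : A) (b : B) :
    TensorProduct.liftBiadditive f hl hr (a ⊗ₜ b) = f a b := by
  simp [TensorProduct.liftBiadditive]

namespace GBF

variable {R : Type u} [Ring R] {M : Type v} [AddCommGroup M] [Module Rᵐᵒᵖ M]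
  {K : Type w} [AddCommGroup K] {DK : DoubleModule R K} (β : GBF R M K DK)

theorem b_zero_left (y : M) : β.b 0 y = 0 :=
  map_zero (AddMonoidHom.mk' (β.b · y) (β.add_left · · y))

theorem b_zero_right (x : M) : β.b x 0 = 0 :=
  map_zero (AddMonoidHom.mk' (β.b x) (β.add_right x))

theorem b_sum_right (x : M) {ι : Type*} (s : Finset ι) (y : ι → M) :
    β.b x (∑ i ∈ s, y i) = ∑ i ∈ s, β.b x (y i) :=
  map_sum (AddMonoidHom.mk' (β.b x) (β.add_right x)) y s

theorem b_finsuppSum_right (x : M) {ι N : Type*} [Zero N] (l : ι →₀ N) (y : ι → N → M) :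
    β.b x (l.sum y) = l.sum fun i n => β.b x (y i n) :=
  map_finsuppSum (AddMonoidHom.mk' (β.b x) (β.add_right x)) l y

end GBF

namespace BalTensor

variable {S : Type u} [Ring S] {A : Type v} [AddCommGroup A] [Module Sᵐᵒᵖ A]

theorem mk_op_smul_tmul {B : Type w} [AddCommGroup B] [Module S B] (s : S) (a : A) (b : B) :
    (Submodule.Quotient.mk ((op s • a) ⊗ₜ[ℤ] b) : BalTensor S A B) =
      Submodule.Quotient.mk (a ⊗ₜ[ℤ] (s • b)) :=
  (Submodule.Quotient.eq _).2 (Submodule.subset_span ⟨s, a, b, rfl⟩)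

variable (S A) in
noncomputable def rid : BalTensor S A S →ₗ[ℤ] A :=
  (balRel S A S).liftQ
    (TensorProduct.liftBiadditive (fun a s => op s • a) (fun _ _ _ => smul_add _ _ _)
      (fun _ _ _ => by rw [op_add, add_smul]))
    (by
      rw [balRel, Submodule.span_le]
      rintro _ ⟨s, a, b, rfl⟩
      rw [SetLike.mem_coe, LinearMap.mem_ker, map_sub, TensorProduct.liftBiadditive_tmul,
        TensorProduct.liftBiadditive_tmul, smul_eq_mul, op_mul, mul_smul, sub_self])

theorem rid_mk (a : A) (s : S) :
    rid S A (Submodule.Quotient.mk (a ⊗ₜ[ℤ] s)) = op s • a := by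
  rw [rid, Submodule.liftQ_apply, TensorProduct.liftBiadditive_tmul]

end BalTensor

theorem RightFlat.eq_zero_of_forall_tmul_eq_zero {S : Type u} [Ring S] {F : Type v}
    [AddCommGroup F] [Module Sᵐᵒᵖ F] (hF : RightFlat S F) {B : Type u} [AddCommGroup B]
    [Module S B] {k : ℕ} (v : Fin k → B) (hv : Injective fun s : S => fun j => s • v j) {c : F}
    (hc : ∀ j, (Submodule.Quotient.mk (c ⊗ₜ[ℤ] v j) : BalTensor S F B) = 0) : c = 0 := by
  let ev : S →ₗ[S] Fin k → B := LinearMap.pi fun j => LinearMap.toSpanSingleton S B (v j)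
  have hc1 : (Submodule.Quotient.mk (c ⊗ₜ[ℤ] (1 : S)) : BalTensor S F S) = 0 := by
    apply hF S (Fin k → B) _ _ _ _ ev hv
    have hev : ev 1 = ∑ j, Pi.single j (v j) := by
      rw [Finset.univ_sum_single]
      ext j
      simp [ev]
    rw [map_zero, balMap_mk, LinearMap.id_apply, hev, TensorProduct.tmul_sum,
      ← Submodule.mkQ_apply, map_sum]
    refine Finset.sum_eq_zero fun j _ => ?_
    have hsingle : Pi.single j (v j) = LinearMap.single S (fun _ : Fin k => B) j (v j) := rfl
    rw [Submodule.mkQ_apply, hsingle, ← LinearMap.id_apply (R := Sᵐᵒᵖ) c, ← balMap_mk, hc j,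
      map_zero]
  simpa [BalTensor.rid_mk] using congrArg (BalTensor.rid S F) hc1

theorem balpha_isAdjoint {R : Type u} [Ring R] {M : Type v} [AddCommGroup M] [Module Rᵐᵒᵖ M]
    (α : Module.End Rᵐᵒᵖ M → Module.End Rᵐᵒᵖ M) : (balpha α).IsAdjoint α := fun w x y =>
  (Submodule.Quotient.eq _).2 (Submodule.subset_span ⟨w, x, y, rfl⟩)

namespace Kalpha

variable {R : Type u} [Ring R] {M : Type v} [AddCommGroup M] [Module Rᵐᵒᵖ M]
  {α : Module.End Rᵐᵒᵖ M → Module.End Rᵐᵒᵖ M}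

@[elab_as_elim]
theorem induction_on {P : Kalpha α → Prop} (t : Kalpha α) (zero : P 0)
    (b : ∀ x y, P ((balpha α).b x y)) (add : ∀ t t', P t → P t' → P (t + t')) : P t := by
  induction t using Submodule.Quotient.induction_on with
  | _ t =>
    induction t with
    | zero => exact zero
    | tmul x y => exact b x y
    | add t t' ht ht' => exact add _ _ ht ht'

theorem m0_zero (r : R) : (KalphaDM α).m0 0 r = 0 :=
  map_zero (kSmul0 α r)

noncomputable def lift {A : Type*} [AddCommGroup A] (f : M → M → A)
    (hl : ∀ x x' y, f (x + x') y = f x y + f x' y) (hr : ∀ x y y', f x (y + y') = f x y + f x y')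
    (hrel : ∀ w x y, f (w x) y = f x (α w y)) : Kalpha α →+ A :=
  ((kalphaRel α).liftQ (TensorProduct.liftBiadditive f hl hr) (by
    rw [kalphaRel, Submodule.span_le]
    rintro _ ⟨w, x, y, rfl⟩
    rw [SetLike.mem_coe, LinearMap.mem_ker, map_sub, TensorProduct.liftBiadditive_tmul,
      TensorProduct.liftBiadditive_tmul, hrel, sub_self])).toAddMonoidHom

@[simp]
theorem lift_b {A : Type*} [AddCommGroup A] (f : M → M → A)
    (hl : ∀ x x' y, f (x + x') y = f x y + f x' y) (hr : ∀ x y y', f x (y + y') = f x y + f x y')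
    (hrel : ∀ w x y, f (w x) y = f x (α w y)) (x y : M) :
    lift f hl hr hrel ((balpha α).b x y) = f x y :=
  TensorProduct.liftBiadditive_tmul f hl hr x y

section Coords

variable {ι : Type*} (g : M → ι →₀ Module.End Rᵐᵒᵖ M) (hg_add : ∀ m m', g (m + m') = g m + g m')
  (hg : ∀ w m i, g (α w m) i = g m i * w)
include hg_add hg

noncomputable def coords : Kalpha α →+ (ι →₀ M) :=
  lift (fun x y => (g y).mapRange (· x) (LinearMap.zero_apply x))
    (fun x x' y => by ext; simp)
    (fun x y y' => by rw [hg_add]; exact Finsupp.mapRange_add (fun _ _ => rfl) _ _)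
    (fun w x y => by ext i; simp [hg])

theorem coords_b (x y : M) (i : ι) : coords g hg_add hg ((balpha α).b x y) i = g y i x := by
  simp [coords]

theorem coords_m0 (t : Kalpha α) (r : R) :
    coords g hg_add hg ((KalphaDM α).m0 t r) = op r • coords g hg_add hg t := by
  induction t using induction_on with
  | zero => rw [m0_zero, map_zero, smul_zero]
  | b x y => ext i; rw [← (balpha α).smul_left, Finsupp.smul_apply, coords_b, coords_b, map_smul]
  | add t t' ht ht' => rw [(KalphaDM α).m0_add_left, map_add, map_add, ht, ht', smul_add]

theorem _root_.balpha_rightInjective_of_injective (hg_inj : Injective g) :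
    (balpha α).RightInjective := fun x x' h =>
  hg_inj <| Finsupp.ext fun i => LinearMap.ext fun y => by
    simpa only [coords_b] using DFunLike.congr_fun (congrArg (coords g hg_add hg) (h y)) i

variable {p : ι → M} (hp : ∀ m, (g m).sum (fun i w => α w (p i)) = m)
include hp

theorem sum_coords (t : Kalpha α) :
    (coords g hg_add hg t).sum (fun i x => (balpha α).b x (p i)) = t := by
  induction t using induction_on with
  | zero => rw [map_zero, Finsupp.sum_zero_index]
  | b x y =>
    conv_rhs => rw [← hp y]
    simp only [coords, lift_b]
    rw [Finsupp.sum_mapRange_index (h := fun i x => (balpha α).b x (p i))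
        fun i => (balpha α).b_zero_left _,
      (balpha α).b_finsuppSum_right]
    exact Finsupp.sum_congr fun i _ => balpha_isAdjoint α _ _ _
  | add t t' ht ht' =>
    rw [map_add, Finsupp.sum_add_index' (h := fun i x => (balpha α).b x (p i))
      (fun i => (balpha α).b_zero_left _) (fun i => ((balpha α).add_left · · (p i))), ht, ht']

theorem exists_b_eq (hfin : Finite ι ∨ Module.Finite Rᵐᵒᵖ M) (f : M → Kalpha α)
    (hf_add : ∀ y y', f (y + y') = f y + f y')
    (hf_smul : ∀ y r, f (op r • y) = (KalphaDM α).m0 (f y) r) :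
    ∃ x, ∀ y, f y = (balpha α).b y x := by
  let F : M →ₗ[Rᵐᵒᵖ] ι →₀ M :=
    { toFun := fun y => coords g hg_add hg (f y)
      map_add' := fun y y' => by rw [hf_add, map_add]
      map_smul' := fun r y => by rw [← op_unop r, hf_smul, coords_m0]; rfl }
  obtain ⟨S, hS⟩ : ∃ S : Finset ι, ∀ y, (F y).support ⊆ S := by
    rcases hfin with hι | hM
    · have := Fintype.ofFinite ι
      exact ⟨Finset.univ, fun _ => Finset.subset_univ _⟩
    · exact F.exists_finset_support_subset
  let H : ι → Module.End Rᵐᵒᵖ M := fun i => Finsupp.lapply i ∘ₗ F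
  refine ⟨∑ i ∈ S, α (H i) (p i), fun y => ?_⟩
  calc f y = (F y).sum fun i x => (balpha α).b x (p i) := (sum_coords g hg_add hg hp _).symm
    _ = ∑ i ∈ S, (balpha α).b (H i y) (p i) :=
      Finsupp.sum_of_support_subset _ (hS y) _ fun i _ => (balpha α).b_zero_left _
    _ = ∑ i ∈ S, (balpha α).b y (α (H i) (p i)) :=
      Finset.sum_congr rfl fun i _ => balpha_isAdjoint α _ _ _
    _ = (balpha α).b y (∑ i ∈ S, α (H i) (p i)) := ((balpha α).b_sum_right _ _ _).symm

theorem _root_.balpha_rightRegular_of_dualBasis (hfin : Finite ι ∨ Module.Finite Rᵐᵒᵖ M) :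
    (balpha α).RightRegular :=
  ⟨balpha_rightInjective_of_injective g hg_add hg fun m m' h => by rw [← hp m, ← hp m', h],
    exists_b_eq g hg_add hg hp hfin⟩

end Coords

section ContractLeft

variable (hα : IsAntiEndo α)

noncomputable def contractLeft (φ : M →ₗ[Rᵐᵒᵖ] Rᵐᵒᵖ) : Kalpha α →+ M :=
  lift (fun x y => α (φ.smulRight x) y)
    (fun x x' y => by
      rw [show φ.smulRight (x + x') = φ.smulRight x + φ.smulRight x' by ext; simp, hα.1]; rfl)
    (fun x y y' => map_add _ y y')
    (fun w x y => by
      rw [← LinearMap.comp_smulRight, ← Module.End.mul_eq_comp, hα.2.2, Module.End.mul_apply])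

theorem contractLeft_b (φ : M →ₗ[Rᵐᵒᵖ] Rᵐᵒᵖ) (x y : M) :
    contractLeft hα φ ((balpha α).b x y) = α (φ.smulRight x) y :=
  lift_b _ _ _ _ x y

theorem b_contractLeft (φ : M →ₗ[Rᵐᵒᵖ] Rᵐᵒᵖ) (y : M) (t : Kalpha α) :
    (balpha α).b y (contractLeft hα φ t) = (KalphaDM α).m0 t (φ y).unop := by
  induction t using induction_on with
  | zero => rw [map_zero, (balpha α).b_zero_right, m0_zero]
  | b x z =>
    rw [contractLeft_b, ← balpha_isAdjoint, LinearMap.smulRight_apply, ← (balpha α).smul_left,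
      op_unop]
  | add t t' ht ht' => rw [map_add, (balpha α).add_right, ht, ht', (KalphaDM α).m0_add_left]

end ContractLeft

end Kalpha

theorem balpha_rightRegular_of_finite_projective {R : Type u} [Ring R] {M : Type v}
    [AddCommGroup M] [Module Rᵐᵒᵖ M] [Module.Finite Rᵐᵒᵖ M] [Module.Projective Rᵐᵒᵖ M]
    {α : Module.End Rᵐᵒᵖ M → Module.End Rᵐᵒᵖ M} (hα : IsAntiEndo α) :
    (balpha α).RightRegular := by
  obtain ⟨n, s, v, hs⟩ := Module.Projective.exists_fin_linearCombination_comp_eq_id Rᵐᵒᵖ M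
  let φ : Fin n → M →ₗ[Rᵐᵒᵖ] Rᵐᵒᵖ := fun i => Finsupp.lapply i ∘ₗ s
  have hsum : ∀ y, ∑ i, φ i y • v i = y := fun y => by
    conv_rhs => rw [← LinearMap.id_apply (R := Rᵐᵒᵖ) y, ← hs]
    rw [LinearMap.comp_apply, Finsupp.linearCombination_apply,
      Finsupp.sum_fintype _ (fun i a => a • v i) fun _ => zero_smul _ _]
    rfl
  have hsplit : ∀ z, ∑ i, Kalpha.contractLeft hα (φ i) ((balpha α).b (v i) z) = z := fun z => by
    have hunit : ∑ i, (φ i).smulRight (v i) = 1 := LinearMap.ext fun y => by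
      simpa using hsum y
    simp only [Kalpha.contractLeft_b, ← LinearMap.sum_apply, ← hα.map_sum, hunit, hα.2.1,
      Module.End.one_apply]
  refine ⟨fun x x' h => ?_, fun f hf_add hf_smul => ?_⟩
  · rw [← hsplit x, ← hsplit x']
    simp only [h]
  · refine ⟨∑ i, Kalpha.contractLeft hα (φ i) (f (v i)), fun y => ?_⟩
    calc f y = ∑ i, f (op (φ i y).unop • v i) := by
          simp only [op_unop]
          conv_lhs => rw [← hsum y]
          exact map_sum (AddMonoidHom.mk' f hf_add) _ _
      _ = ∑ i, (balpha α).b y (Kalpha.contractLeft hα (φ i) (f (v i))) := by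
          simp only [hf_smul, Kalpha.b_contractLeft]
      _ = _ := ((balpha α).b_sum_right _ _ _).symm

section OverEnd

variable {R : Type u} [Ring R] {M : Type v} [AddCommGroup M] [Module Rᵐᵒᵖ M]
  {α : Module.End Rᵐᵒᵖ M → Module.End Rᵐᵒᵖ M} [Module (Module.End Rᵐᵒᵖ M)ᵐᵒᵖ M]
  (hsmul : ∀ (w : Module.End Rᵐᵒᵖ M) (m : M), op w • m = α w m)
include hsmul

theorem exists_twistedDualBasis {ι : Type*}
    (s : M →ₗ[(Module.End Rᵐᵒᵖ M)ᵐᵒᵖ] ι →₀ (Module.End Rᵐᵒᵖ M)ᵐᵒᵖ) (p : ι → M)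
    (hs : Finsupp.linearCombination _ p ∘ₗ s = LinearMap.id) :
    ∃ g : M → ι →₀ Module.End Rᵐᵒᵖ M, (∀ m m', g (m + m') = g m + g m') ∧
      (∀ w m i, g (α w m) i = g m i * w) ∧ ∀ m, (g m).sum (fun i w => α w (p i)) = m := by
  refine ⟨fun m => (s m).mapRange unop rfl, fun m m' => ?_, fun w m i => ?_, fun m => ?_⟩
  · dsimp only
    rw [map_add]
    exact Finsupp.mapRange_add (fun _ _ => rfl) _ _
  · simp [← hsmul]
  · conv_rhs => rw [← LinearMap.id_apply (R := (Module.End Rᵐᵒᵖ M)ᵐᵒᵖ) m, ← hs]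
    rw [Finsupp.sum_mapRange_index fun i => by rw [← hsmul, op_zero, zero_smul],
      LinearMap.comp_apply, Finsupp.linearCombination_apply]
    simp only [← hsmul, op_unop]

theorem balpha_rightRegular_of_finite_projective_over_End
    [Module.Finite (Module.End Rᵐᵒᵖ M)ᵐᵒᵖ M] [Module.Projective (Module.End Rᵐᵒᵖ M)ᵐᵒᵖ M] :
    (balpha α).RightRegular := by
  obtain ⟨n, s, p, hs⟩ := Module.Projective.exists_fin_linearCombination_comp_eq_id
    (Module.End Rᵐᵒᵖ M)ᵐᵒᵖ M
  obtain ⟨g, hg_add, hg, hp⟩ := exists_twistedDualBasis hsmul s p hs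
  exact balpha_rightRegular_of_dualBasis g hg_add hg hp (.inl inferInstance)

theorem balpha_rightRegular_of_projective_over_End
    [Module.Projective (Module.End Rᵐᵒᵖ M)ᵐᵒᵖ M] [Module.Finite Rᵐᵒᵖ M] :
    (balpha α).RightRegular := by
  obtain ⟨s, hs⟩ := Module.projective_def'.1 ‹Module.Projective (Module.End Rᵐᵒᵖ M)ᵐᵒᵖ M›
  obtain ⟨g, hg_add, hg, hp⟩ := exists_twistedDualBasis hsmul s id hs
  exact balpha_rightRegular_of_dualBasis g hg_add hg hp (.inr inferInstance)

end OverEnd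

theorem balpha_rightInjective_of_flat {R : Type u} [Ring R] {M : Type v} [AddCommGroup M]
    [Module Rᵐᵒᵖ M] [Module.Finite Rᵐᵒᵖ M] {α : Module.End Rᵐᵒᵖ M → Module.End Rᵐᵒᵖ M}
    {F : Type*} [AddCommGroup F] [Module (Module.End Rᵐᵒᵖ M)ᵐᵒᵖ F]
    (hF : RightFlat (Module.End Rᵐᵒᵖ M) F) (g : M → F) (hg_inj : Injective g)
    (hg_add : ∀ m m', g (m + m') = g m + g m') (hg : ∀ w m, g (α w m) = op w • g m) :
    (balpha α).RightInjective := by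
  let Λ : Kalpha α →+ BalTensor (Module.End Rᵐᵒᵖ M) F M :=
    Kalpha.lift (fun a b => Submodule.Quotient.mk (g b ⊗ₜ[ℤ] a))
      (fun a a' b => by rw [TensorProduct.tmul_add]; rfl)
      (fun a b b' => by rw [hg_add, TensorProduct.add_tmul]; rfl)
      (fun w a b => by rw [hg, BalTensor.mk_op_smul_tmul]; rfl)
  obtain ⟨k, v, hv⟩ := Module.Finite.exists_fin (R := Rᵐᵒᵖ) (M := M)
  intro x x' h
  have hc : g x - g x' = 0 :=
    hF.eq_zero_of_forall_tmul_eq_zero v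
      (fun w w' hww' => LinearMap.ext_on_range hv fun j => congrFun hww' j) fun j => by
        have hj := congrArg Λ (h (v j))
        simp only [Λ, Kalpha.lift_b] at hj
        rw [TensorProduct.sub_tmul, Submodule.Quotient.mk_sub, hj, sub_self]
  exact hg_inj (sub_eq_zero.1 hc)

/-- Sufficient conditions for `b_α` to be right regular / right injective,
in terms of `M` as a right `R`-module and `M^α` as a right `W`-module. -/
theorem stmt_8 {R : Type u} [Ring R] {M : Type v} [AddCommGroup M] [Module Rᵐᵒᵖ M]
    (α : Module.End Rᵐᵒᵖ M → Module.End Rᵐᵒᵖ M) (hα : IsAntiEndo α) :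
    -- (1)
    ((Module.Finite Rᵐᵒᵖ M ∧ Module.Projective Rᵐᵒᵖ M) ∨
      (letI := malphaModule α hα
       Module.Finite (Module.End Rᵐᵒᵖ M)ᵐᵒᵖ M ∧
         Module.Projective (Module.End Rᵐᵒᵖ M)ᵐᵒᵖ M) →
      (balpha (M := M) α).RightRegular) ∧
    -- (2)
    ((letI := malphaModule α hα
      Module.Projective (Module.End Rᵐᵒᵖ M)ᵐᵒᵖ M) → Module.Finite Rᵐᵒᵖ M →
      (balpha (M := M) α).RightRegular) ∧
    -- (3) `M^α` embeds in a free right `W`-module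
    ((∃ (ι : Type v) (g : M → (ι →₀ Module.End Rᵐᵒᵖ M)), Function.Injective g ∧
        (∀ m m' : M, g (m + m') = g m + g m') ∧
        (∀ (w : Module.End Rᵐᵒᵖ M) (m : M) (i : ι), g (α w m) i = g m i * w)) →
      (balpha (M := M) α).RightInjective) ∧
    -- (4) `M^α` embeds in a flat right `W`-module and `M` is f.g.
    ((∃ (F : Type (max u v)) (iF : AddCommGroup F)
        (mF : Module (Module.End Rᵐᵒᵖ M)ᵐᵒᵖ F),
        RightFlat (Module.End Rᵐᵒᵖ M) F ∧
        ∃ g : M → F, Function.Injective g ∧ (∀ m m' : M, g (m + m') = g m + g m') ∧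
          ∀ (w : Module.End Rᵐᵒᵖ M) (m : M), g (α w m) = MulOpposite.op w • g m) →
      Module.Finite Rᵐᵒᵖ M → (balpha (M := M) α).RightInjective) := by
  refine ⟨?_, fun _ _ => ?_, ?_, ?_⟩
  · rintro (⟨_, _⟩ | ⟨_, _⟩)
    · exact balpha_rightRegular_of_finite_projective hα
    · let := malphaModule α hα
      exact balpha_rightRegular_of_finite_projective_over_End fun _ _ => rfl
  · let := malphaModule α hα
    exact balpha_rightRegular_of_projective_over_End fun _ _ => rfl
  · rintro ⟨_, g, hg_inj, hg_add, hg⟩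
    exact balpha_rightInjective_of_injective g hg_add hg hg_inj
  · rintro ⟨_, _, _, hF, g, hg_inj, hg_add, hg⟩ _
    exact balpha_rightInjective_of_flat hF g hg_inj hg_add hg
end

section
/- Let R be a ring and M a right R-module which is a generator. Let b : M × M → K be a right regular general bilinear form with corresponding anti-endomorphism α = α(b). If b_α is right regular, then b is similar to b_α. -/
open MulOpposite TensorProduct Function

universe u v w v'

/-- `M` is a generator of `Mod-R`: `R_R` is a direct summand of `Mⁿ` for some `n ∈ ℕ`. -/
def IsGenerator (R : Type u) [Ring R] (M : Type v) [AddCommGroup M] [Module Rᵐᵒᵖ M] : Prop :=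
  ∃ (n : ℕ) (i : R →ₗ[Rᵐᵒᵖ] (Fin n → M)) (p : (Fin n → M) →ₗ[Rᵐᵒᵖ] R), ∀ r : R, p (i r) = r

/-! Adjointness of `α` makes `x ⊗ y ↦ b(x, y)` a well-defined double-module map `f : K_α → K`.
Since `M` is a generator, `∑ⱼ gⱼ(mⱼ) = 1` for some `gⱼ ∈ Hom_R(M, R)`, so every `k` equals
`∑ⱼ k •₀ gⱼ(mⱼ)`, and each functional `y ↦ k •₀ gⱼ(y)` is represented by any right regular form.
Representing them through `b` writes `k` as a sum of values of `b`, so `f` is onto. For `k ∈ ker f`,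
representing them through `b_α` gives vectors `xⱼ` with `b(·, xⱼ) = f(k) •₀ gⱼ(·) = 0`, so `xⱼ = 0`
and `k = 0`. -/

namespace DoubleModule

variable {R : Type u} [Ring R] {K : Type w} [AddCommGroup K] (DK : DoubleModule R K)

def m0LeftHom (r : R) : K →+ K :=
  AddMonoidHom.mk' (DK.m0 · r) fun k k' => DK.m0_add_left k k' r

def m1LeftHom (r : R) : K →+ K :=
  AddMonoidHom.mk' (DK.m1 · r) fun k k' => DK.m1_add_left k k' r

def m0RightHom (k : K) : R →+ K :=
  AddMonoidHom.mk' (DK.m0 k) (DK.m0_add_right k)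

theorem m0_zero_left (r : R) : DK.m0 0 r = 0 :=
  map_zero (DK.m0LeftHom r)

theorem m0_sum_right {ι : Type*} (s : Finset ι) (k : K) (r : ι → R) :
    DK.m0 k (∑ i ∈ s, r i) = ∑ i ∈ s, DK.m0 k (r i) :=
  map_sum (DK.m0RightHom k) r s

theorem eq_sum_m0_of_sum_eq_one {n : ℕ} (k : K) (r : Fin n → R) (hr : ∑ j, r j = 1) :
    k = ∑ j, DK.m0 k (r j) := by
  rw [← m0_sum_right, hr, m0_one]

end DoubleModule

theorem IsGenerator.exists_sum_eq_one {R : Type u} [Ring R] {M : Type v} [AddCommGroup M]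
    [Module Rᵐᵒᵖ M] (h : IsGenerator R M) :
    ∃ (n : ℕ) (g : Fin n → M →ₗ[Rᵐᵒᵖ] R) (m : Fin n → M), ∑ j, g j (m j) = 1 := by
  classical
  obtain ⟨n, i, p, hpi⟩ := h
  refine ⟨n, fun j => p ∘ₗ LinearMap.single Rᵐᵒᵖ (fun _ => M) j, i 1, ?_⟩
  simp only [LinearMap.coe_comp, comp_apply, LinearMap.coe_single, ← map_sum,
    Finset.univ_sum_single, hpi]

namespace GBF

variable {R : Type u} [Ring R] {M : Type v} [AddCommGroup M] [Module Rᵐᵒᵖ M]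
  {K : Type w} [AddCommGroup K] {DK : DoubleModule R K} (β : GBF R M K DK)

def toAddMonoidHom₂ : M →+ M →+ K :=
  AddMonoidHom.mk' (fun x => AddMonoidHom.mk' (β.b x) (β.add_right x))
    fun x x' => AddMonoidHom.ext (β.add_left x x')

variable {β}

theorem RightRegular.exists_m0_eq (hβ : β.RightRegular) (g : M →ₗ[Rᵐᵒᵖ] R) (k : K) :
    ∃ x : M, ∀ y : M, DK.m0 k (g y) = β.b y x :=
  hβ.2 _ (fun y y' => by rw [map_add, DK.m0_add_right])
    fun y r => by rw [map_smul, op_smul_eq_mul, DK.m0_mul]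

theorem RightRegular.exists_eq_sum (hgen : IsGenerator R M) (hβ : β.RightRegular) (k : K) :
    ∃ (n : ℕ) (m x : Fin n → M), k = ∑ j, β.b (m j) (x j) := by
  obtain ⟨n, g, m, hsum⟩ := hgen.exists_sum_eq_one
  choose x hx using fun j => hβ.exists_m0_eq (g j) k
  refine ⟨n, m, x, ?_⟩
  simpa only [hx] using DK.eq_sum_m0_of_sum_eq_one k _ hsum

theorem injective_of_map_b_eq {K' : Type v'} [AddCommGroup K'] {DK' : DoubleModule R K'}
    {β' : GBF R M K' DK'} (hgen : IsGenerator R M) (hβ : β.RightRegular)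
    (hβ' : β'.RightInjective) (f : K →+ K') (hf : ∀ k r, f (DK.m0 k r) = DK'.m0 (f k) r)
    (hfb : ∀ x y, f (β.b x y) = β'.b x y) : Injective f := by
  refine (injective_iff_map_eq_zero f).2 fun k hk => ?_
  obtain ⟨n, g, m, hsum⟩ := hgen.exists_sum_eq_one
  have hvanish : ∀ j y, DK.m0 k (g j y) = 0 := by
    intro j
    obtain ⟨x, hx⟩ := hβ.exists_m0_eq (g j) k
    have hx0 : x = 0 := hβ' x 0 fun y => by
      rw [← hfb, ← hx, hf, hk, DK'.m0_zero_left, b_zero_right]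
    intro y
    rw [hx, hx0, b_zero_right]
  rw [DK.eq_sum_m0_of_sum_eq_one k _ hsum]
  exact Finset.sum_eq_zero fun j _ => hvanish j (m j)

section Kalpha

variable (β) {α : Module.End Rᵐᵒᵖ M → Module.End Rᵐᵒᵖ M}

noncomputable def liftKalpha (hadj : β.IsAdjoint α) : Kalpha α →ₗ[ℤ] K :=
  (kalphaRel α).liftQ
    (TensorProduct.liftAddHom β.toAddMonoidHom₂ fun c x y => by
      rw [map_zsmul, AddMonoidHom.zsmul_apply, map_zsmul]).toIntLinearMap
    (by
      rw [kalphaRel, Submodule.span_le]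
      rintro _ ⟨w, x, y, rfl⟩
      rw [SetLike.mem_coe, LinearMap.mem_ker, map_sub]
      exact sub_eq_zero.2 (hadj w x y))

variable (hadj : β.IsAdjoint α)

theorem liftKalpha_balpha (x y : M) : β.liftKalpha hadj ((balpha α).b x y) = β.b x y :=
  rfl

theorem liftKalpha_m0 (k : Kalpha α) (r : R) :
    β.liftKalpha hadj ((KalphaDM α).m0 k r) = DK.m0 (β.liftKalpha hadj k) r := by
  have h : (β.liftKalpha hadj).comp (kSmul0 α r) =
      (DK.m0LeftHom r).toIntLinearMap.comp (β.liftKalpha hadj) :=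
    Submodule.linearMap_qext _ (TensorProduct.ext' fun x y => β.smul_left x y r)
  exact LinearMap.congr_fun h k

theorem liftKalpha_m1 (k : Kalpha α) (r : R) :
    β.liftKalpha hadj ((KalphaDM α).m1 k r) = DK.m1 (β.liftKalpha hadj k) r := by
  have h : (β.liftKalpha hadj).comp (kSmul1 α r) =
      (DK.m1LeftHom r).toIntLinearMap.comp (β.liftKalpha hadj) :=
    Submodule.linearMap_qext _ (TensorProduct.ext' fun x y => β.smul_right x y r)
  exact LinearMap.congr_fun h k

end Kalpha

end GBF

/-- If `M` is a generator, `b` is a right regular general bilinear form on `M`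
with corresponding anti-endomorphism `α`, and `b_α` is right regular, then `b ∼ b_α`. -/
theorem stmt_10 {R : Type u} [Ring R] {M : Type v} [AddCommGroup M] [Module Rᵐᵒᵖ M]
    (hgen : IsGenerator R M)
    {K : Type w} [AddCommGroup K] {DK : DoubleModule R K} (β : GBF R M K DK)
    (hreg : β.RightRegular)
    (α : Module.End Rᵐᵒᵖ M → Module.End Rᵐᵒᵖ M) (hadj : β.IsAdjoint α)
    (hba : (balpha (M := M) α).RightRegular) :
    (balpha (M := M) α).Similar β := by
  set f := β.liftKalpha hadj
  have hf0 := β.liftKalpha_m0 hadj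
  have hsurj : Surjective f := fun k => by
    obtain ⟨n, m, x, rfl⟩ := hreg.exists_eq_sum hgen k
    exact ⟨∑ j, (balpha α).b (m j) (x j), by simp only [map_sum, f, β.liftKalpha_balpha]⟩
  have hinj : Injective f :=
    GBF.injective_of_map_b_eq hgen hba hreg.1 f.toAddMonoidHom hf0 (β.liftKalpha_balpha hadj)
  exact ⟨f, ⟨⟨map_add f, hf0, β.liftKalpha_m1 hadj⟩, hinj, hsurj⟩,
    fun x y => (β.liftKalpha_balpha hadj x y).symm⟩
end
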